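/- Let d ≥ 1 and let α, β ∈ ℤ^d with α ▹ 0 and β ▹ 0. Then ⟨𝒞(α·x), 𝒮(β·x)⟩ = 0 in L²([0,1]^d). -/

import Mathlib

open MeasureTheory Filter Topology

/-- The 1-periodic piecewise linear "cosine-like" function:
`𝒞(x) = 4|x - 1/2| - 1` on `[0,1]`, extended by `𝒞(x) = 𝒞(x - ⌊x⌋)`. -/
noncomputable def Cfun (x : ℝ) : ℝ := 4 * |Int.fract x - 1 / 2| - 1

/-- The 1-periodic piecewise linear "sine-like" function:
`𝒮(x) = |2 - 4|x - 1/4|| - 1` on `[0,1]`, extended by `𝒮(x) = 𝒮(x - ⌊x⌋)`. -/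
noncomputable def Sfun (x : ℝ) : ℝ := abs (2 - 4 * |Int.fract x - 1 / 4|) - 1

/-- `α ▹ 0`: the first nonzero entry of the integer vector `α` is positive. -/
def PosLead {d : ℕ} (α : Fin d → ℤ) : Prop :=
  ∃ i : Fin d, 0 < α i ∧ ∀ j : Fin d, j < i → α j = 0

/-!
The reflection `x ↦ 1 - x` preserves the cube `[0,1]^d` and Lebesgue measure, and it sends
`α·x` to `(∑ αᵢ) - α·x` with `∑ αᵢ ∈ ℤ`. Since `𝒞` and `𝒮` are 1-periodic, `𝒞` even and `𝒮` odd,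
the integrand changes sign under the reflection, so the integral equals its own negative.
-/

theorem setIntegral_eq_zero_of_apply_sub_left_eq_neg {G E : Type*} [AddGroup G]
    [MeasurableSpace G] [MeasurableAdd G] [MeasurableNeg G] [NormedAddCommGroup E]
    [NormedSpace ℝ E] (μ : Measure G) [μ.IsNegInvariant] [μ.IsAddLeftInvariant] (a : G)
    {s : Set G} (hs : (a - ·) ⁻¹' s = s) {f : G → E} (hf : ∀ x, f (a - x) = -f x) :
    ∫ x in s, f x ∂μ = 0 := by
  have h := (Measure.measurePreserving_sub_left μ a).setIntegral_preimage_emb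
    (measurableEmbedding_subLeft a) f s
  simp only [hs, hf, integral_neg] at h
  rw [neg_eq_iff_add_eq_zero, ← two_smul ℝ, smul_eq_zero] at h
  exact h.resolve_left two_ne_zero

theorem Cfun_periodic : Function.Periodic Cfun 1 := fun x => by
  simp [Cfun, Int.fract_add_one]

theorem Sfun_periodic : Function.Periodic Sfun 1 := fun x => by
  simp [Sfun, Int.fract_add_one]

theorem Cfun_neg (t : ℝ) : Cfun (-t) = Cfun t := by
  by_cases h : Int.fract t = 0
  · simp [Cfun, Int.fract_neg_eq_zero.mpr h, h]
  · simp only [Cfun, Int.fract_neg h]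
    rw [← abs_neg]
    ring_nf

theorem Sfun_neg (t : ℝ) : Sfun (-t) = -Sfun t := by
  by_cases h : Int.fract t = 0
  · norm_num [Sfun, Int.fract_neg_eq_zero.mpr h, h, abs_of_pos]
  · simp only [Sfun, Int.fract_neg h]
    grind [Int.fract_nonneg t, Int.fract_lt_one t, abs_of_nonneg, abs_of_nonpos]

theorem Cfun_intCast_sub (n : ℤ) (t : ℝ) : Cfun (n - t) = Cfun t := by
  simpa [Cfun_neg] using Cfun_periodic.int_mul_sub_eq n (x := t)

theorem Sfun_intCast_sub (n : ℤ) (t : ℝ) : Sfun (n - t) = -Sfun t := by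
  simpa [Sfun_neg] using Sfun_periodic.int_mul_sub_eq n (x := t)

theorem sum_intCast_mul_one_sub {ι : Type*} [Fintype ι] (γ : ι → ℤ) (x : ι → ℝ) :
    ∑ i, (γ i : ℝ) * (1 - x) i = ((∑ i, γ i : ℤ) : ℝ) - ∑ i, (γ i : ℝ) * x i := by
  simp [mul_sub, Finset.sum_sub_distrib]

theorem inner_C_S_multivariate_eq_zero_general (d : ℕ) (α β : Fin d → ℤ) :
    ∫ x in Set.Icc (0 : Fin d → ℝ) 1,
        Cfun (∑ i, (α i : ℝ) * x i) * Sfun (∑ i, (β i : ℝ) * x i) = 0 := by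
  refine setIntegral_eq_zero_of_apply_sub_left_eq_neg volume 1
    (by simp [Set.preimage_const_sub_Icc]) fun x => ?_
  simp only [sum_intCast_mul_one_sub, Cfun_intCast_sub, Sfun_intCast_sub, mul_neg]

/-- For `α, β ∈ ℤ^d` with `α ▹ 0`, `β ▹ 0`, one has `⟨𝒞(α·x), 𝒮(β·x)⟩ = 0` in `L²([0,1]^d)`. -/
theorem inner_C_S_multivariate_eq_zero (d : ℕ) (hd : 1 ≤ d) (α β : Fin d → ℤ)
    (hα : PosLead α) (hβ : PosLead β) :
    ∫ x in Set.Icc (0 : Fin d → ℝ) 1,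
        Cfun (∑ i, (α i : ℝ) * x i) * Sfun (∑ i, (β i : ℝ) * x i) = 0 :=
  inner_C_S_multivariate_eq_zero_general d α β
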